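/- arXiv:2012.08369 — 2 statements merged into one kernel-verified Lean document; each statement's English description precedes it below -/
import Mathlib

section
/- Let f be holomorphic on an open set containing the closed disk of center z₀ and radius (1+ε)r, with f(z₀) ≠ 0. Then the number n(r) of zeros of f (counted with multiplicity) in the open disk of radius r around z₀ satisfies n(r) ≤ (1/log(1+ε)) · (log max_{|z-z₀|=(1+ε)r} |f(z)| − log |f(z₀)|). -/
/-!
By Jensen's formula, the mean of `log ‖f‖` over the circle of radius `R = (1 + ε) r` equals
`log ‖f z₀‖ + ∑ log (R / ‖a - z₀‖)`, summed over the zeros `a` of `f` in the closed disk of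
radius `R`. Every term is nonnegative and each zero in the disk of radius `r` contributes at least
`log (1 + ε)`, while the mean is at most `log max_{|z - z₀| = R} ‖f z‖`.
-/

open Metric MeromorphicOn

theorem Finset.sum_le_finsum {α M : Type*} [AddCommMonoid M] [PartialOrder M]
    [IsOrderedAddMonoid M] {f : α → M} (hf : (Function.support f).Finite) (hf₀ : ∀ a, 0 ≤ f a)
    (s : Finset α) : ∑ a ∈ s, f a ≤ ∑ᶠ a, f a := by
  classical
  rw [finsum_eq_sum_of_support_subset f (s := s ∪ hf.toFinset) (by simp)]
  exact Finset.sum_le_sum_of_subset_of_nonneg Finset.subset_union_left fun a _ _ ↦ hf₀ a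

theorem MeromorphicOn.divisor_const_smul {𝕜 E : Type*} [NontriviallyNormedField 𝕜]
    [NormedAddCommGroup E] [NormedSpace 𝕜 E] {U : Set 𝕜} {f : 𝕜 → E} (hf : MeromorphicOn f U)
    {c : 𝕜} (hc : c ≠ 0) : divisor (c • f) U = divisor f U := by
  ext z
  by_cases hz : z ∈ U
  · rw [divisor_apply (hf.const_smul c) hz, divisor_apply hf hz]
    exact congrArg _ (meromorphicOrderAt_smul_of_ne_zero (analyticAt_const (v := c)) hc)
  · simp [hz]

theorem AnalyticOnNhd.norm_le_of_forall_mem_sphere_norm_le {c : ℂ} {R M : ℝ} {f : ℂ → ℂ}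
    (hR : 0 < R) (hf : AnalyticOnNhd ℂ f (closedBall c R)) (hM : ∀ z ∈ sphere c R, ‖f z‖ ≤ M) :
    ‖f c‖ ≤ M := by
  refine Complex.norm_le_of_forall_mem_frontier_norm_le isBounded_ball ?_ ?_
    (subset_closure (mem_ball_self hR))
  · exact DifferentiableOn.diffContOnCl (by rw [closure_ball c hR.ne']; exact hf.differentiableOn)
  · rwa [frontier_ball c hR.ne']

theorem AnalyticOnNhd.sum_divisor_le_of_norm_le {c : ℂ} {r R M : ℝ} {f : ℂ → ℂ}
    (r_pos : 0 < |r|) (r_lt_R : |r| < |R|) (h₁f : AnalyticOnNhd ℂ f (closedBall c |R|))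
    (h₂f : f c ≠ 0) (f_bound : ∀ z ∈ sphere c |R|, ‖f z‖ ≤ M) :
    ∑ᶠ u, divisor f (closedBall c |r|) u
      ≤ (Real.log M - Real.log ‖f c‖) / Real.log (R / r) := by
  have hfc : 0 < ‖f c‖ := norm_pos_iff.mpr h₂f
  have hfc_le : ‖f c‖ ≤ M :=
    h₁f.norm_le_of_forall_mem_sphere_norm_le (r_pos.trans r_lt_R) f_bound
  -- `AnalyticOnNhd.sum_divisor_le` needs `1 ≤ M`, since `log ‖f z‖` is the junk value `0` at
  -- zeros on the circle; normalizing to `f c = 1` provides it by the maximum modulus principle.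
  have hg : AnalyticOnNhd ℂ ((f c)⁻¹ • f) (closedBall c |R|) := fun z hz ↦ (h₁f z hz).const_smul
  have hg_bound : ∀ z ∈ sphere c |R|, ‖((f c)⁻¹ • f) z‖ ≤ M / ‖f c‖ := fun z hz ↦ by
    simpa [norm_smul, div_eq_inv_mul] using
      mul_le_mul_of_nonneg_left (f_bound z hz) (inv_nonneg.2 hfc.le)
  have hcount := hg.sum_divisor_le r_pos r_lt_R ((one_le_div hfc).2 hfc_le) (by simp [h₂f])
    hg_bound
  rwa [divisor_const_smul (h₁f.meromorphicOn.mono_set (closedBall_subset_closedBall r_lt_R.le))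
    (inv_ne_zero h₂f), Pi.smul_apply, smul_eq_mul, inv_mul_cancel₀ h₂f, norm_one, div_one,
    Real.log_div (hfc.trans_le hfc_le).ne' hfc.ne'] at hcount

theorem jensen_zero_count_general (z₀ : ℂ) (r ε : ℝ) (hr : 0 < r) (hε : 0 < ε)
    (f : ℂ → ℂ) (U : Set ℂ)
    (hKU : Metric.closedBall z₀ ((1 + ε) * r) ⊆ U)
    (hf : ∀ z ∈ U, AnalyticAt ℂ f z)
    (hf0 : f z₀ ≠ 0)
    (Z : Finset ℂ) (hZ : ∀ z : ℂ, z ∈ Z ↔ z ∈ Metric.ball z₀ r ∧ f z = 0)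
    (m : ℂ → ℕ)
    (hm : ∀ z ∈ Z, ∀ hz : z ∈ U, analyticOrderAt f z = (m z : ℕ∞)) :
    ((∑ z ∈ Z, m z : ℕ) : ℝ) ≤ (1 / Real.log (1 + ε)) *
      (Real.log (sSup ((fun z => ‖f z‖) '' Metric.sphere z₀ ((1 + ε) * r)))
        - Real.log (‖f z₀‖)) := by
  set R := (1 + ε) * r
  have hrR : r < R := by nlinarith
  have hR : 0 < R := hr.trans hrR
  have hfR : AnalyticOnNhd ℂ f (closedBall z₀ R) := AnalyticOnNhd.mono hf hKU
  have hbound (z : ℂ) (hz : z ∈ sphere z₀ R) : ‖f z‖ ≤ sSup ((‖f ·‖) '' sphere z₀ R) :=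
    le_csSup ((isCompact_sphere z₀ R).bddAbove_image
      (hfR.continuousOn.mono sphere_subset_closedBall).norm) ⟨z, hz, rfl⟩
  have hcount := AnalyticOnNhd.sum_divisor_le_of_norm_le (r := r) (R := R)
    (by rwa [abs_of_pos hr]) (by rwa [abs_of_pos hr, abs_of_pos hR]) (by rwa [abs_of_pos hR])
    hf0 (by rwa [abs_of_pos hR])
  rw [abs_of_pos hr, mul_div_cancel_right₀ (1 + ε) hr.ne'] at hcount
  have hfr : AnalyticOnNhd ℂ f (closedBall z₀ r) := hfR.mono (closedBall_subset_closedBall hrR.le)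
  have hdivisor (z : ℂ) (hz : z ∈ Z) : divisor f (closedBall z₀ r) z = m z := by
    have hz_ball := ball_subset_closedBall ((hZ z).1 hz).1
    rw [hfr.divisor_apply hz_ball,
      hm z hz (hKU (closedBall_subset_closedBall hrR.le hz_ball))]
    simp
  have hsum : ∑ z ∈ Z, (m z : ℤ) ≤ ∑ᶠ u, divisor f (closedBall z₀ r) u := by
    rw [← Finset.sum_congr rfl hdivisor]
    exact Finset.sum_le_finsum ((divisor f _).finiteSupport (isCompact_closedBall z₀ r))
      hfr.divisor_nonneg Z
  rw [one_div_mul_eq_div]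
  exact le_trans (by exact_mod_cast hsum) hcount

/-- Jensen's formula consequence: the number of zeros (with multiplicity) of a holomorphic
function `f` in the open disk `D(z₀, r)` is bounded by
`(1/log(1+ε)) · (log max_{|z-z₀|=(1+ε)r} |f| − log |f(z₀)|)`. -/
theorem jensen_zero_count (z₀ : ℂ) (r ε : ℝ) (hr : 0 < r) (hε : 0 < ε)
    (f : ℂ → ℂ) (U : Set ℂ) (hU : IsOpen U)
    (hKU : Metric.closedBall z₀ ((1 + ε) * r) ⊆ U)
    (hf : ∀ z ∈ U, AnalyticAt ℂ f z)
    (hf0 : f z₀ ≠ 0)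
    (Z : Finset ℂ) (hZ : ∀ z : ℂ, z ∈ Z ↔ z ∈ Metric.ball z₀ r ∧ f z = 0)
    (m : ℂ → ℕ)
    (hm : ∀ z ∈ Z, ∀ hz : z ∈ U, analyticOrderAt f z = (m z : ℕ∞)) :
    ((∑ z ∈ Z, m z : ℕ) : ℝ) ≤ (1 / Real.log (1 + ε)) *
      (Real.log (sSup ((fun z => ‖f z‖) '' Metric.sphere z₀ ((1 + ε) * r)))
        - Real.log (‖f z₀‖)) :=
  jensen_zero_count_general z₀ r ε hr hε f U hKU hf hf0 Z hZ m hm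
end

section
/- Let x₁, …, x_J be real numbers and I ⊂ ℝ a bounded interval of positive length. Then there exists x ∈ I such that ∏_{j=1}^J |x − x_j| ≥ exp(−J(1 + log(2/|I|))). -/
/-!
On `[a, b]` with `L = b - a`, the mean of `t ↦ log |t - c|` is at least `log (L / 2) - 1` for
every `c ∈ ℝ`, the worst case being the midpoint `c = (a + b) / 2`. Hence the mean of
`log ∏ⱼ |t - xⱼ|` is at least `J (log (L / 2) - 1)`, and a function exceeds its mean somewhere
off the null set `{x₁, …, x_J}`, where the logarithm of the product is the sum of the
logarithms.
-/

open MeasureTheory Set Real Interval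

theorem MeasureTheory.exists_mem_notMem_null_setAverage_le {α : Type*} [MeasurableSpace α]
    {μ : Measure α} {s N : Set α} {f : α → ℝ} (hμ : μ s ≠ 0) (hμ₁ : μ s ≠ ⊤)
    (hf : IntegrableOn f s μ) (hN : μ N = 0) :
    ∃ x ∈ s, x ∉ N ∧ ⨍ a in s, f a ∂μ ≤ f x := by
  have hpos := measure_setAverage_le_pos hμ hμ₁ hf
  rw [← measure_sdiff_null hN] at hpos
  obtain ⟨x, ⟨hxs, hx⟩, hxN⟩ := nonempty_of_measure_ne_zero hpos.ne'
  exact ⟨x, hxs, hxN, hx⟩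

theorem Real.mul_log_half_le_mul_log_add_mul_log {u v : ℝ} (h : 0 < u + v) :
    (u + v) * log ((u + v) / 2) ≤ u * log u + v * log v := by
  wlog hvu : v ≤ u generalizing u v
  · simpa only [add_comm] using this (by linarith) (le_of_not_ge hvu)
  rcases le_or_gt 0 v with hv | hv
  · have hconv := convexOn_mul_log.2 (mem_Ici.2 (hv.trans hvu)) (mem_Ici.2 hv)
      (by norm_num : (0 : ℝ) ≤ 1 / 2) (by norm_num : (0 : ℝ) ≤ 1 / 2) (by norm_num)
    simp only [smul_eq_mul] at hconv
    rw [show 1 / 2 * u + 1 / 2 * v = (u + v) / 2 by ring] at hconv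
    linarith
  · -- `|v| < u`, so `log |v| ≤ log u`, and multiplying by `v < 0` reverses this
    have hu : 0 < u := by linarith
    have hlog_v : v * log u ≤ v * log v := by
      rw [← log_neg_eq_log v]
      exact mul_le_mul_of_nonpos_left (log_le_log (by linarith) (by linarith)) hv.le
    have hlog_half : log ((u + v) / 2) ≤ log u := log_le_log (by linarith) (by linarith)
    nlinarith [mul_le_mul_of_nonneg_left hlog_half h.le]

theorem intervalIntegrable_log_abs_sub (a b c : ℝ) :
    IntervalIntegrable (fun t => log |t - c|) volume a b := by
  simpa only [log_abs, sub_add_cancel] using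
    (intervalIntegral.intervalIntegrable_log' (a := a - c) (b := b - c)).comp_sub_right c

theorem integral_log_abs_sub (a b c : ℝ) :
    ∫ t in a..b, log |t - c| = (b - c) * log (b - c) - (a - c) * log (a - c) - (b - a) := by
  simp only [log_abs]
  rw [intervalIntegral.integral_comp_sub_right (f := log), integral_log]
  ring

theorem mul_log_half_sub_one_le_integral_log_abs_sub {a b : ℝ} (hab : a < b) (c : ℝ) :
    (b - a) * (log ((b - a) / 2) - 1) ≤ ∫ t in a..b, log |t - c| := by
  have key := mul_log_half_le_mul_log_add_mul_log (u := b - c) (v := c - a) (by linarith)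
  rw [show b - c + (c - a) = b - a by ring] at key
  rw [integral_log_abs_sub, show a - c = -(c - a) by ring, log_neg_eq_log]
  linarith

theorem card_mul_log_half_sub_one_le_intervalAverage_sum_log_abs_sub {ι : Type*}
    (s : Finset ι) (c : ι → ℝ) {a b : ℝ} (hab : a < b) :
    s.card * (log ((b - a) / 2) - 1) ≤ ⨍ t in a..b, ∑ j ∈ s, log |t - c j| := by
  have hL : 0 < b - a := sub_pos.2 hab
  rw [interval_average_eq, smul_eq_mul, le_inv_mul_iff₀ hL,
    intervalIntegral.integral_finsetSum fun j _ => intervalIntegrable_log_abs_sub a b (c j),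
    mul_left_comm, ← nsmul_eq_mul]
  exact Finset.card_nsmul_le_sum _ _ _ fun j _ =>
    mul_log_half_sub_one_le_integral_log_abs_sub hab (c j)

/-- Sjöstrand's lemma: for real numbers `x₁,…,x_J` and a bounded interval `I = [a,b]` with
positive length, there is `x ∈ I` with `∏ |x − x_j| ≥ exp(−J(1 + log(2/|I|)))`. -/
theorem sjostrand_product_lower_bound (J : ℕ) (x : Fin J → ℝ) (a b : ℝ) (hab : a < b) :
    ∃ t ∈ Set.Icc a b,
      Real.exp (-(J : ℝ) * (1 + Real.log (2 / (b - a)))) ≤ ∏ j, |t - x j| := by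
  have hab' : Ι a b = Ioc a b := uIoc_of_le hab.le
  have hint : IntegrableOn (fun t => ∑ j, log |t - x j|) (Ι a b) :=
    intervalIntegrable_iff.1 <| by
      simpa only [Finset.sum_fn] using
        IntervalIntegrable.sum _ fun j _ => intervalIntegrable_log_abs_sub a b (x j)
  obtain ⟨t, ht, htx, havg⟩ := exists_mem_notMem_null_setAverage_le (N := range x)
    (by simp [hab', hab]) (by simp [hab']) hint ((finite_range x).measure_zero _)
  have hfactor : ∀ j ∈ Finset.univ, |t - x j| ≠ 0 := fun j _ =>
    abs_ne_zero.2 <| sub_ne_zero.2 fun h => htx ⟨j, h.symm⟩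
  refine ⟨t, Ioc_subset_Icc_self (hab' ▸ ht), ?_⟩
  rw [← exp_log (Finset.prod_pos fun j hj => (abs_nonneg _).lt_of_ne' (hfactor j hj)), exp_le_exp,
    log_prod hfactor]
  calc -(J : ℝ) * (1 + log (2 / (b - a)))
      = (Finset.univ : Finset (Fin J)).card * (log ((b - a) / 2) - 1) := by
        rw [Finset.card_univ, Fintype.card_fin, ← inv_div, log_inv]; ring
    _ ≤ ⨍ s in a..b, ∑ j, log |s - x j| :=
        card_mul_log_half_sub_one_le_intervalAverage_sum_log_abs_sub _ x hab
    _ ≤ ∑ j, log |t - x j| := havg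
end
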